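/- arXiv:2101.05962 — 4 statements merged into one kernel-verified Lean document; each statement's English description precedes it below -/
import Mathlib

section
/- Let α be a type (the universe of DUAs) and let B, D, C, CS, P be subsets of α. Define the DSF transfer function f : Set α → Set α by f(x) = B ∪ (x \ D) ∪ C ∪ ((x \ CS) ∩ P). Then f is distributive with respect to intersection: for all subsets y, z of α, f(y ∩ z) = f(y) ∩ f(z). -/
/-- The DSF transfer function `f(x) = B ∪ (x \ D) ∪ C ∪ ((x \ CS) ∩ P)` is
distributive with respect to intersection. -/
theorem dsf_transfer_distributive {α : Type*} (B D C CS P : Set α) (y z : Set α) :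
    B ∪ ((y ∩ z) \ D) ∪ C ∪ (((y ∩ z) \ CS) ∩ P) =
      (B ∪ (y \ D) ∪ C ∪ ((y \ CS) ∩ P)) ∩ (B ∪ (z \ D) ∪ C ∪ ((z \ CS) ∩ P)) := by
  ext a
  simp only [Set.mem_union, Set.mem_inter_iff, Set.mem_diff]
  tauto
end

section
/- Let α be a type, let B, D, C, CS, P be subsets of α, and let f(x) = B ∪ (x \ D) ∪ C ∪ ((x \ CS) ∩ P) be the corresponding DSF transfer function. Then f commutes with finite nonempty intersections: for every nonempty finite index set s and family of subsets x : ι → Set α, f(⋂ i ∈ s, x i) = ⋂ i ∈ s, f(x i). -/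
/-- The DSF transfer function commutes with finite nonempty intersections. -/
theorem dsf_transfer_biInter {α ι : Type*} (B D C CS P : Set α)
    (s : Finset ι) (hs : s.Nonempty) (x : ι → Set α) :
    B ∪ ((⋂ i ∈ s, x i) \ D) ∪ C ∪ (((⋂ i ∈ s, x i) \ CS) ∩ P) =
      ⋂ i ∈ s, (B ∪ (x i \ D) ∪ C ∪ ((x i \ CS) ∩ P)) := by
  obtain ⟨j, hj⟩ := hs
  ext a
  simp only [Set.mem_union, Set.mem_diff, Set.mem_inter_iff, Set.mem_iInter]
  constructor
  · rintro (((hB | ⟨hx, hD⟩) | hC) | ⟨⟨hx, hCS⟩, hP⟩) i hi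
    · exact Or.inl (Or.inl (Or.inl hB))
    · exact Or.inl (Or.inl (Or.inr ⟨hx i hi, hD⟩))
    · exact Or.inl (Or.inr hC)
    · exact Or.inr ⟨⟨hx i hi, hCS⟩, hP⟩
  · intro h
    by_cases hB : a ∈ B
    · exact Or.inl (Or.inl (Or.inl hB))
    by_cases hC : a ∈ C
    · exact Or.inl (Or.inr hC)
    by_cases hD : a ∈ D
    · -- then each i gives the inter part or nothing useful except the inter part
      have h' : ∀ i, i ∈ s → (a ∈ x i ∧ a ∉ CS) ∧ a ∈ P := by
        intro i hi
        rcases h i hi with ((hB' | ⟨hx, hD'⟩) | hC') | hp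
        · exact absurd hB' hB
        · exact absurd hD hD'
        · exact absurd hC' hC
        · exact hp
      exact Or.inr ⟨⟨fun i hi => (h' i hi).1.1, (h' j hj).1.2⟩, (h' j hj).2⟩
    · by_cases hCS : a ∈ CS ∨ a ∉ P
      · have h' : ∀ i, i ∈ s → a ∈ x i := by
          intro i hi
          rcases h i hi with ((hB' | ⟨hx, _⟩) | hC') | ⟨⟨hx, hCS'⟩, hP'⟩
          · exact absurd hB' hB
          · exact hx
          · exact absurd hC' hC
          · exact hx
        exact Or.inl (Or.inl (Or.inr ⟨fun i hi => h' i hi, hD⟩))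
      · push_neg at hCS
        have h' : ∀ i, i ∈ s → a ∈ x i := by
          intro i hi
          rcases h i hi with ((hB' | ⟨hx, _⟩) | hC') | ⟨⟨hx, _⟩, _⟩
          · exact absurd hB' hB
          · exact hx
          · exact absurd hC' hC
          · exact hx
        exact Or.inr ⟨⟨fun i hi => h' i hi, hCS.1⟩, hCS.2⟩
end

section
/- Let α be a type and let f₁, f₂ : Set α → Set α be two DSF transfer functions, i.e., fᵢ(x) = Bᵢ ∪ (x \ Dᵢ) ∪ Cᵢ ∪ ((x \ CSᵢ) ∩ Pᵢ) for fixed subsets Bᵢ, Dᵢ, Cᵢ, CSᵢ, Pᵢ of α (i = 1, 2). Then the family is closed under composition: there exist subsets B', D', C', CS', P' of α such that for every subset x of α, f₂(f₁(x)) = B' ∪ (x \ D') ∪ C' ∪ ((x \ CS') ∩ P'). -/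
/-- The family of DSF transfer functions is closed under composition. -/
theorem dsf_transfer_comp_closed {α : Type*}
    (B₁ D₁ C₁ CS₁ P₁ B₂ D₂ C₂ CS₂ P₂ : Set α) :
    ∃ B' D' C' CS' P' : Set α, ∀ x : Set α,
      (B₂ ∪ ((B₁ ∪ (x \ D₁) ∪ C₁ ∪ ((x \ CS₁) ∩ P₁)) \ D₂) ∪ C₂ ∪
        (((B₁ ∪ (x \ D₁) ∪ C₁ ∪ ((x \ CS₁) ∩ P₁)) \ CS₂) ∩ P₂)) =
      B' ∪ (x \ D') ∪ C' ∪ ((x \ CS') ∩ P') := by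
  refine ⟨B₂ ∪ C₂ ∪ ((B₁ ∪ C₁) ∩ (D₂ᶜ ∪ (CS₂ᶜ ∩ P₂))), Set.univ, ∅, ∅,
    (D₁ᶜ ∪ (CS₁ᶜ ∩ P₁)) ∩ (D₂ᶜ ∪ (CS₂ᶜ ∩ P₂)), fun x => ?_⟩
  ext a
  simp only [Set.mem_union, Set.mem_diff, Set.mem_inter_iff, Set.mem_compl_iff,
    Set.mem_empty_iff_false, Set.mem_univ]
  tauto
end

section
/- Let α be a type and let fs be a finite list of DSF transfer functions on Set α, i.e., each element of fs is of the form x ↦ B ∪ (x \ D) ∪ C ∪ ((x \ CS) ∩ P) for some fixed subsets B, D, C, CS, P of α. Then the composition of all functions in fs (with the empty composition being the identity) is again a DSF transfer function: there exist subsets B', D', C', CS', P' of α such that the composed function equals x ↦ B' ∪ (x \ D') ∪ C' ∪ ((x \ CS') ∩ P') on every subset x of α. -/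
/-!
Every DSF transfer function is a classical gen/kill function `x ↦ G ∪ (x \ K)`, with
`G = B ∪ C` and `K = D ∩ (CS ∪ Pᶜ)`; conversely a gen/kill function is the DSF transfer
function with `C = P = ∅`. Gen/kill functions are closed under composition, since
`G₂ ∪ ((G₁ ∪ (x \ K₁)) \ K₂) = (G₂ ∪ (G₁ \ K₂)) ∪ (x \ (K₁ ∪ K₂))`.
-/

/-- A function on sets is a DSF transfer function if it has the form
`x ↦ B ∪ (x \ D) ∪ C ∪ ((x \ CS) ∩ P)` for fixed subsets `B, D, C, CS, P`. -/
def IsDSFTransfer {α : Type*} (f : Set α → Set α) : Prop :=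
  ∃ B D C CS P : Set α, ∀ x : Set α, f x = B ∪ (x \ D) ∪ C ∪ ((x \ CS) ∩ P)

def IsGenKill {α : Type*} (f : Set α → Set α) : Prop :=
  ∃ G K : Set α, ∀ x : Set α, f x = G ∪ (x \ K)

namespace IsGenKill

variable {α : Type*}

lemma id : IsGenKill (id : Set α → Set α) :=
  ⟨∅, ∅, fun x => by simp⟩

lemma comp {f g : Set α → Set α} (hg : IsGenKill g) (hf : IsGenKill f) :
    IsGenKill (g ∘ f) := by
  obtain ⟨G₁, K₁, hf⟩ := hf
  obtain ⟨G₂, K₂, hg⟩ := hg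
  refine ⟨G₂ ∪ (G₁ \ K₂), K₁ ∪ K₂, fun x => ?_⟩
  rw [Function.comp_apply, hf, hg]
  ext a
  simp only [Set.mem_union, Set.mem_sdiff]
  tauto

lemma list_foldr_comp {fs : List (Set α → Set α)} (hfs : ∀ f ∈ fs, IsGenKill f) :
    IsGenKill (fs.foldr (· ∘ ·) _root_.id) := by
  induction fs with
  | nil => exact IsGenKill.id
  | cons f fs ih =>
    exact (hfs f List.mem_cons_self).comp (ih fun g hg => hfs g (List.mem_cons_of_mem f hg))

lemma isDSFTransfer {f : Set α → Set α} (hf : IsGenKill f) : IsDSFTransfer f := by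
  obtain ⟨G, K, hf⟩ := hf
  exact ⟨G, K, ∅, Set.univ, ∅, fun x => by simp [hf]⟩

end IsGenKill

lemma IsDSFTransfer.isGenKill {α : Type*} {f : Set α → Set α} (hf : IsDSFTransfer f) :
    IsGenKill f := by
  obtain ⟨B, D, C, CS, P, hf⟩ := hf
  refine ⟨B ∪ C, D ∩ (CS ∪ Pᶜ), fun x => ?_⟩
  rw [hf]
  ext a
  simp only [Set.mem_union, Set.mem_sdiff, Set.mem_inter_iff, Set.mem_compl_iff]
  tauto

/-- The composition of a finite list of DSF transfer functions (with the empty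
composition being the identity) is again a DSF transfer function. -/
theorem dsf_transfer_list_comp {α : Type*} (fs : List (Set α → Set α))
    (hfs : ∀ f ∈ fs, IsDSFTransfer f) :
    ∃ B' D' C' CS' P' : Set α, ∀ x : Set α,
      (fs.foldr (· ∘ ·) id) x = B' ∪ (x \ D') ∪ C' ∪ ((x \ CS') ∩ P') :=
  (IsGenKill.list_foldr_comp fun f hf => (hfs f hf).isGenKill).isDSFTransfer
end
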